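/- Let E ∈ H satisfy E·E = −1 and K·E = −1, and suppose E = C + D where C and D both have virtual genus 0 (i.e., C·C + K·C = −2 and D·D + K·D = −2) and C·C ≤ −1, D·D ≤ −1. Then C·D = 1 and {C·C, D·D} = {−1, −2}; that is, one component is an exceptional class (square −1, K-pairing −1) and the other has square −2 and K-pairing 0. -/
import Mathlib


open Finset Filter

/-- A homology class of the `n`-point blowup of the ruled surface `Σ_g × S²`,
written in coordinates `(a, b, d)` with respect to the basis `B, F, E₁, …, Eₙ`. -/
abbrev HClass (n : ℕ) := ℤ × ℤ × (Fin n → ℤ)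

/-- The intersection pairing determined by `B·B = 0`, `F·F = 0`, `B·F = 1`,
`Eᵢ·Eᵢ = −1`, all other pairings of distinct basis vectors being `0`. -/
def ipair {n : ℕ} (A A' : HClass n) : ℤ :=
  A.1 * A'.2.1 + A'.1 * A.2.1 - ∑ i, A.2.2 i * A'.2.2 i

/-- The canonical class `K = −2B + (2g−2)F + E₁ + ⋯ + Eₙ`. -/
def Kcl (n g : ℕ) : HClass n := (-2, 2 * (g : ℤ) - 2, fun _ => 1)

/-- The virtual genus `g_J(A) = (A·A + K·A)/2 + 1`. -/
def gJ (n g : ℕ) (A : HClass n) : ℤ :=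
  (ipair A A + ipair (Kcl n g) A) / 2 + 1

/-- The section-type class `B + kF − Σ_{i∈I} Eᵢ`. -/
def secClass (n : ℕ) (k : ℤ) (I : Finset (Fin n)) : HClass n :=
  (1, k, fun i => if i ∈ I then -1 else 0)

/-- The exceptional basis class `Eᵢ`. -/
def Ecl (n : ℕ) (i : Fin n) : HClass n :=
  (0, 0, fun j => if j = i then 1 else 0)

/-- The class `F − Eᵢ`. -/
def FEcl (n : ℕ) (i : Fin n) : HClass n :=
  (0, 1, fun j => if j = i then -1 else 0)

/-- The fiber class `F`. -/
def Fcl (n : ℕ) : HClass n := (0, 1, fun _ => 0)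

lemma ipair_comm' {n : ℕ} (A B : HClass n) : ipair A B = ipair B A := by
  simp only [ipair]
  rw [Finset.sum_congr rfl (fun i _ => mul_comm (A.2.2 i) (B.2.2 i))]
  ring

lemma ipair_add_right' {n : ℕ} (A B C : HClass n) :
    ipair A (B + C) = ipair A B + ipair A C := by
  simp only [ipair, Prod.fst_add, Prod.snd_add, Pi.add_apply, mul_add, add_mul,
    Finset.sum_add_distrib]
  ring

/-- If `E.E = -1`, `K.E = -1`, `E = C + D` with both components of virtual genus `0`
and `C.C ≤ -1`, `D.D ≤ -1`, then `C.D = 1` and one component is an exceptional class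
(square `-1`, `K`-pairing `-1`) while the other has square `-2` and `K`-pairing `0`. -/
theorem stmt7 (n g : ℕ) (hn : 1 ≤ n) (hg : 1 ≤ g) (E C D : HClass n)
    (hsum : E = C + D)
    (hEE : ipair E E = -1)
    (hKE : ipair (Kcl n g) E = -1)
    (hgC : ipair C C + ipair (Kcl n g) C = -2)
    (hgD : ipair D D + ipair (Kcl n g) D = -2)
    (hCneg : ipair C C ≤ -1)
    (hDneg : ipair D D ≤ -1) :
    ipair C D = 1 ∧
    ((ipair C C = -1 ∧ ipair (Kcl n g) C = -1 ∧ ipair D D = -2 ∧ ipair (Kcl n g) D = 0) ∨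
     (ipair D D = -1 ∧ ipair (Kcl n g) D = -1 ∧ ipair C C = -2 ∧ ipair (Kcl n g) C = 0)) := by
  subst hsum
  rw [ipair_add_right' (Kcl n g) C D] at hKE
  rw [ipair_comm' (C + D) (C + D), ipair_add_right', ipair_comm' (C + D) C,
    ipair_comm' (C + D) D, ipair_add_right', ipair_add_right', ipair_comm' D C] at hEE
  omega
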